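/- Let G be a finite simple connected graph with m edges and n ≥ 4 vertices. Then σ⁻(G) = ⌊m/2 + n/4⌋ if and only if G is K_n, or K_n minus one edge, or K_n minus the three edges of a triangle. -/

import Mathlib

open scoped Classical

variable {V : Type*}

namespace PSG

/-- A bipartition of the vertex set given by `A` and its complement is
near-balanced (a parity-partition) if the sizes differ by at most 1. -/
def Balanced [Fintype V] [DecidableEq V] (A : Finset V) : Prop :=
  |(A.card : ℤ) - ((Aᶜ : Finset V).card : ℤ)| ≤ 1

/-- The number of edges of `G` between `A` and its complement
(the number of negative edges of the associated parity signature). -/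
def cut [Fintype V] [DecidableEq V] (G : SimpleGraph V) [DecidableRel G.Adj]
    (A : Finset V) : ℕ :=
  ((A ×ˢ (Aᶜ : Finset V)).filter fun p => G.Adj p.1 p.2).card

/-- `Σ⁻(G)`: the set of numbers of negative edges over all parity signatures. -/
def sigmaSet [Fintype V] [DecidableEq V] (G : SimpleGraph V) [DecidableRel G.Adj] :
    Set ℕ :=
  {k | ∃ A : Finset V, Balanced A ∧ k = cut G A}

/-- The rna number `σ⁻(G)`. -/
noncomputable def rna [Fintype V] [DecidableEq V] (G : SimpleGraph V)
    [DecidableRel G.Adj] : ℕ :=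
  sInf (sigmaSet G)

/-- `d⁻(v)`: number of negative edges (crossing edges) at `v`. -/
def dneg [Fintype V] [DecidableEq V] (G : SimpleGraph V) [DecidableRel G.Adj]
    (A : Finset V) (v : V) : ℕ :=
  (Finset.univ.filter fun u => G.Adj v u ∧ ¬(u ∈ A ↔ v ∈ A)).card

/-- `d⁺(v)`: number of positive edges (same-side edges) at `v`. -/
def dpos [Fintype V] [DecidableEq V] (G : SimpleGraph V) [DecidableRel G.Adj]
    (A : Finset V) (v : V) : ℕ :=
  (Finset.univ.filter fun u => G.Adj v u ∧ (u ∈ A ↔ v ∈ A)).card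

/-- The sign-difference `dᐃ(v) = d⁻(v) - d⁺(v)`. -/
def dDelta [Fintype V] [DecidableEq V] (G : SimpleGraph V) [DecidableRel G.Adj]
    (A : Finset V) (v : V) : ℤ :=
  (dneg G A v : ℤ) - (dpos G A v : ℤ)

/-- `f` is a parity-labeling witnessing that `σ` is a parity-signature of `G`. -/
def IsParityLabeling [Fintype V] (G : SimpleGraph V) (σ : V → V → ℤ)
    (f : V ≃ Fin (Fintype.card V)) : Prop :=
  ∀ u v : V, G.Adj u v →
    σ u v = if ((f u : ℕ) % 2 = (f v : ℕ) % 2) then 1 else -1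

/-- `(G, σ)` is a parity signed graph. -/
def IsParitySigned [Fintype V] (G : SimpleGraph V) (σ : V → V → ℤ) : Prop :=
  ∃ f : V ≃ Fin (Fintype.card V), IsParityLabeling G σ f

/-- The sign multiplier of a switch at the vertex set `U`. -/
def sgn [DecidableEq V] (U : Finset V) (v : V) : ℤ := if v ∈ U then -1 else 1

/-- The signature obtained from `σ` by switching at the set of vertices `U`. -/
def switch [DecidableEq V] (σ : V → V → ℤ) (U : Finset V) : V → V → ℤ :=
  fun a b => sgn U a * sgn U b * σ a b

/-- One parity-switch step: switch at a vertex with odd label and one with even label. -/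
def ParitySwitchStep [Fintype V] [DecidableEq V] (G : SimpleGraph V)
    (σ σ' : V → V → ℤ) : Prop :=
  ∃ f : V ≃ Fin (Fintype.card V), IsParityLabeling G σ f ∧
    ∃ u v : V, (f u : ℕ) % 2 = 1 ∧ (f v : ℕ) % 2 = 0 ∧ σ' = switch σ {u, v}

/-- `G` is the star `K_{1,n-1}` on its vertex set. -/
def IsStar (G : SimpleGraph V) : Prop :=
  ∃ c : V, ∀ a b : V, G.Adj a b ↔ ((a = c ∧ b ≠ c) ∨ (b = c ∧ a ≠ c))

/-- The unordered pair `{a,b}` equals the unordered pair `{u,v}`. -/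
def pairEq (a b u v : V) : Prop := (a = u ∧ b = v) ∨ (a = v ∧ b = u)

/-- `G` is the complete graph minus one edge. -/
def IsCompleteMinusEdge (G : SimpleGraph V) : Prop :=
  ∃ u v : V, u ≠ v ∧ ∀ a b : V, G.Adj a b ↔ (a ≠ b ∧ ¬ pairEq a b u v)

/-- `G` is the complete graph minus the three edges of a triangle. -/
def IsCompleteMinusTriangle (G : SimpleGraph V) : Prop :=
  ∃ u v w : V, u ≠ v ∧ u ≠ w ∧ v ≠ w ∧
    ∀ a b : V, G.Adj a b ↔
      (a ≠ b ∧ ¬ (pairEq a b u v ∨ pairEq a b u w ∨ pairEq a b v w))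

/-- `G` is the complete graph minus two nonadjacent (disjoint) edges. -/
def IsCompleteMinusTwoDisjointEdges (G : SimpleGraph V) : Prop :=
  ∃ u v x y : V, u ≠ v ∧ x ≠ y ∧ u ≠ x ∧ u ≠ y ∧ v ≠ x ∧ v ≠ y ∧
    ∀ a b : V, G.Adj a b ↔ (a ≠ b ∧ ¬ (pairEq a b u v ∨ pairEq a b x y))

/-- `G` is the complete graph minus two adjacent edges. -/
def IsCompleteMinusTwoAdjacentEdges (G : SimpleGraph V) : Prop :=
  ∃ u v w : V, u ≠ v ∧ u ≠ w ∧ v ≠ w ∧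
    ∀ a b : V, G.Adj a b ↔ (a ≠ b ∧ ¬ (pairEq a b u v ∨ pairEq a b u w))

/-- `G` is the join `P₂ ∨ I_{n-2}`: an edge joined completely to an independent set. -/
def IsEdgeJoinIndep (G : SimpleGraph V) : Prop :=
  ∃ a b : V, a ≠ b ∧
    ∀ x y : V, G.Adj x y ↔ (x ≠ y ∧ (x = a ∨ x = b ∨ y = a ∨ y = b))

/-!
Let `H = Gᶜ` have `t` edges. For balanced `A`, `cut G A + cut H A = ⌊n/2⌋⌈n/2⌉`, which equals
`⌊m/2 + n/4⌋ + ⌈t/2⌉` since `m + t = n(n-1)/2`. So `σ⁻(G) = ⌊m/2 + n/4⌋` exactly when no balanced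
cut of `H` has more than `⌈t/2⌉` edges (one with at least `t/2` edges always exists).

If `uv` is an edge of `H`, averaging over the `⌈n/2⌉`-sets separating `u` from `v` gives a balanced
cut of `H` with more than `t/2` edges, and with more than `(t+1)/2` edges if `H` has an edge
disjoint from `uv`. So when `H` has an edge, `t` is odd and the edges of `H` pairwise meet, making
`H` a star or a triangle. A star with `t ≥ 3` edges whose centre has a non-neighbour in `H` (which
the connectedness of `G` provides) keeps `min(t, ⌈n/2⌉) > (t+1)/2` of its edges in a balanced cut
whose small side contains the centre and avoids as many leaves as possible. What remains is
`t ≤ 1` or a triangle: `G` is `K_n`, `K_n - e` or `K_n - △`.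
-/

open Finset

lemma card_filter_or_of_disjoint {α : Type*} {s : Finset α} {p q : α → Prop} [DecidablePred p]
    [DecidablePred q] (h : ∀ a ∈ s, p a → ¬ q a) :
    #{a ∈ s | p a ∨ q a} = #{a ∈ s | p a} + #{a ∈ s | q a} := by
  rw [filter_or, card_union_of_disjoint (disjoint_filter.2 h)]

lemma two_mul_choose_two_add_self (n : ℕ) : 2 * n.choose 2 + n = n * n := by
  induction n with
  | zero => rfl
  | succ n ih => rw [Nat.choose_succ_succ, Nat.choose_one_right]; linarith

lemma half_mul_half_succ_eq (n m t : ℕ) (h : m + t = n.choose 2) :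
    n / 2 * ((n + 1) / 2) = (2 * m + n) / 4 + (t + 1) / 2 := by
  have hC := two_mul_choose_two_add_self n
  rw [← h] at hC
  obtain ⟨q, rfl | rfl⟩ := Nat.even_or_odd' n
  · rw [show 2 * q / 2 = q by omega, show (2 * q + 1) / 2 = q by omega]
    ring_nf at hC ⊢
    omega
  · rw [show (2 * q + 1) / 2 = q by omega, show (2 * q + 1 + 1) / 2 = q + 1 by omega]
    ring_nf at hC ⊢
    omega

lemma choose_le_choose_succ_of_two_mul_lt {N i : ℕ} (h : 2 * i < N) :
    N.choose i ≤ N.choose (i + 1) := by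
  refine le_of_mul_le_mul_right ?_ (Nat.succ_pos i)
  rw [Nat.choose_succ_right_eq]
  exact Nat.mul_le_mul_left _ (by omega)

lemma choose_succ_lt_choose_of_le_two_mul {N j : ℕ} (hj : j ≤ N) (h : N ≤ 2 * j) :
    N.choose (j + 1) < N.choose j := by
  refine Nat.lt_of_mul_lt_mul_right (a := j + 1) ?_
  rw [Nat.choose_succ_right_eq]
  exact Nat.mul_lt_mul_of_pos_left (by omega) (Nat.choose_pos hj)

lemma choose_lt_four_mul_choose {n : ℕ} (hn : 4 ≤ n) :
    (n - 2).choose ((n + 1) / 2 - 1) < 4 * (n - 4).choose ((n + 1) / 2 - 2) := by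
  obtain ⟨N, rfl⟩ : ∃ N, n = N + 4 := ⟨n - 4, by omega⟩
  rcases Nat.eq_zero_or_pos N with rfl | hN
  · decide
  obtain ⟨i, hi⟩ : ∃ i, (N + 1) / 2 = i + 1 := ⟨(N + 1) / 2 - 1, by omega⟩
  rw [show N + 4 - 2 = N + 2 by omega, show N + 4 - 4 = N by omega,
    show (N + 4 + 1) / 2 - 1 = i + 2 by omega, show (N + 4 + 1) / 2 - 2 = i + 1 by omega,
    Nat.choose_succ_succ', Nat.choose_succ_succ', Nat.choose_succ_succ' N]
  have h1 := choose_le_choose_succ_of_two_mul_lt (N := N) (i := i) (by omega)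
  have h2 := choose_succ_lt_choose_of_le_two_mul (N := N) (j := i + 1) (by omega) (by omega)
  omega

section Cut

variable [Fintype V] [DecidableEq V]

open Fintype

lemma balanced_iff {A : Finset V} : Balanced A ↔ #A = card V / 2 ∨ #A = (card V + 1) / 2 := by
  have := card_le_univ A
  rw [Balanced, card_compl, abs_le]
  omega

lemma exists_balanced : ∃ A : Finset V, Balanced A := by
  obtain ⟨A, -, hA⟩ := exists_subset_card_eq (s := (univ : Finset V)) (n := card V / 2)
    (by rw [card_univ]; omega)
  exact ⟨A, balanced_iff.2 (Or.inl hA)⟩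

variable (H : SimpleGraph V) [DecidableRel H.Adj]

lemma cut_add_cut_compl (A : Finset V) : cut H A + cut Hᶜ A = #A * #Aᶜ := by
  rw [cut, cut, ← card_product,
    ← card_filter_add_card_filter_not (s := A ×ˢ Aᶜ) (fun p => H.Adj p.1 p.2)]
  congr 2
  refine filter_congr fun p hp => ?_
  obtain ⟨h1, h2⟩ := mem_product.1 hp
  have hne : p.1 ≠ p.2 := fun h => mem_compl.1 h2 (h ▸ h1)
  simp [hne]

lemma cut_add_cut_compl_of_balanced {A : Finset V} (hA : Balanced A) :
    cut H A + cut Hᶜ A = card V / 2 * ((card V + 1) / 2) := by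
  rw [cut_add_cut_compl, card_compl]
  rcases balanced_iff.1 hA with h | h <;> rw [h]
  · rw [show card V - card V / 2 = (card V + 1) / 2 by omega]
  · rw [show card V - (card V + 1) / 2 = card V / 2 by omega, mul_comm]

lemma cut_eq_card_filter (A : Finset V) :
    cut H A = #{p : V × V | H.Adj p.1 p.2 ∧ p.1 ∈ A ∧ p.2 ∉ A} := by
  rw [cut]
  congr 1
  ext p
  simp only [mem_filter, mem_product, mem_compl, mem_univ, true_and]
  tauto

lemma cut_eq_card_filter_swap (A : Finset V) :
    cut H A = #{p : V × V | H.Adj p.1 p.2 ∧ p.2 ∈ A ∧ p.1 ∉ A} := by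
  rw [cut_eq_card_filter]
  refine card_nbij' Prod.swap Prod.swap ?_ ?_ (fun _ _ => rfl) (fun _ _ => rfl) <;>
    · intro p
      simp only [coe_filter, mem_univ, true_and, Set.mem_ofPred_eq, Prod.fst_swap, Prod.snd_swap]
      exact fun h => ⟨h.1.symm, h.2⟩

lemma cut_le_card {A : Finset V} {E : Finset (Sym2 V)}
    (hE : ∀ x y, H.Adj x y → x ∈ A → y ∉ A → s(x, y) ∈ E) : cut H A ≤ #E := by
  rw [cut_eq_card_filter]
  refine card_le_card_of_injOn (fun p => s(p.1, p.2)) (fun p hp => ?_) ?_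
  · simp only [coe_filter, mem_univ, true_and, Set.mem_ofPred_eq] at hp
    exact hE _ _ hp.1 hp.2.1 hp.2.2
  · rintro ⟨a, b⟩ hp ⟨c, d⟩ hq h
    simp only [coe_filter, mem_univ, true_and, Set.mem_ofPred_eq] at hp hq
    rcases Sym2.eq_iff.1 h with ⟨rfl, rfl⟩ | ⟨rfl, rfl⟩
    · rfl
    · exact absurd hp.2.1 hq.2.2

lemma cut_le_card_edgeFinset (A : Finset V) : cut H A ≤ #H.edgeFinset :=
  cut_le_card H fun x y hxy _ _ => by simpa using hxy

lemma cut_lt_card_edgeFinset {A : Finset V} {a b : V} (hab : H.Adj a b) (hA : a ∈ A ↔ b ∈ A) :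
    cut H A < #H.edgeFinset := by
  have hmem : s(a, b) ∈ H.edgeFinset := by simpa using hab
  rw [← card_erase_add_one hmem, Nat.lt_succ_iff]
  refine cut_le_card H fun x y hxy hx hy => mem_erase.2 ⟨fun h => ?_, by simpa using hxy⟩
  rcases Sym2.eq_iff.1 h with ⟨rfl, rfl⟩ | ⟨rfl, rfl⟩ <;> tauto

end Cut

section Counting

variable [Fintype V] [DecidableEq V]

open Fintype

lemma card_filter_powersetCard_subset_disjoint (k : ℕ) {P Q : Finset V} (hPQ : Disjoint P Q)
    (hk : #P ≤ k) :
    #{A ∈ powersetCard k univ | P ⊆ A ∧ Disjoint Q A} =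
      (card V - (#P + #Q)).choose (k - #P) := by
  have hcard : #(univ \ (P ∪ Q)) = card V - (#P + #Q) := by
    rw [card_sdiff_of_subset (subset_univ _), card_union_of_disjoint hPQ, card_univ]
  rw [← hcard, ← card_powersetCard]
  refine card_nbij' (· \ P) (· ∪ P) (fun A hA => ?_) (fun B hB => ?_) (fun A hA => ?_)
    (fun B hB => ?_) <;>
    simp only [mem_coe, mem_filter, mem_powersetCard, subset_univ, true_and] at *
  · refine ⟨fun x hx => ?_, by rw [card_sdiff_of_subset hA.2.1, hA.1]⟩
    simp only [mem_sdiff, mem_union, mem_univ, true_and] at hx ⊢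
    exact fun h => h.elim hx.2 (disjoint_left.1 hA.2.2 · hx.1)
  · obtain ⟨hBP, hBQ⟩ := disjoint_union_right.1 (disjoint_of_subset_left hB.1 sdiff_disjoint)
    exact ⟨by rw [card_union_of_disjoint hBP, hB.2]; omega, subset_union_right,
      disjoint_union_right.2 ⟨hBQ.symm, hPQ.symm⟩⟩
  · exact sdiff_union_of_subset hA.2.1
  · exact union_sdiff_cancel_right (disjoint_union_right.1
      (disjoint_of_subset_left hB.1 sdiff_disjoint)).1

variable {k : ℕ} {a b c d : V}

lemma card_filter_mem_notMem (hk : 1 ≤ k) (hab : a ≠ b) :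
    #{A ∈ powersetCard k univ | a ∈ A ∧ b ∉ A} = (card V - 2).choose (k - 1) := by
  have := card_filter_powersetCard_subset_disjoint k (P := {a}) (Q := {b}) (by simpa) (by simpa)
  simpa using this

lemma card_filter_mem_notMem_notMem (hk : 1 ≤ k) (hab : a ≠ b) (hac : a ≠ c) (hbc : b ≠ c) :
    #{A ∈ powersetCard k univ | a ∈ A ∧ b ∉ A ∧ c ∉ A} = (card V - 3).choose (k - 1) := by
  have := card_filter_powersetCard_subset_disjoint k (P := {a}) (Q := {b, c})
    (by simp [hab, hac]) (by simpa)
  simpa [card_pair hbc, disjoint_insert_left] using this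

lemma card_filter_mem_mem_notMem (hk : 2 ≤ k) (hab : a ≠ b) (hac : a ≠ c) (hbc : b ≠ c) :
    #{A ∈ powersetCard k univ | a ∈ A ∧ b ∈ A ∧ c ∉ A} = (card V - 3).choose (k - 2) := by
  have := card_filter_powersetCard_subset_disjoint k (P := {a, b}) (Q := {c})
    (by simp [hac.symm, hbc.symm]) (by rwa [card_pair hab])
  simpa [card_pair hab, insert_subset_iff, and_assoc] using this

lemma card_filter_mem_mem_notMem_notMem (hk : 2 ≤ k) (hab : a ≠ b) (hac : a ≠ c) (had : a ≠ d)
    (hbc : b ≠ c) (hbd : b ≠ d) (hcd : c ≠ d) :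
    #{A ∈ powersetCard k univ | a ∈ A ∧ b ∈ A ∧ c ∉ A ∧ d ∉ A} =
      (card V - 4).choose (k - 2) := by
  have := card_filter_powersetCard_subset_disjoint k (P := {a, b}) (Q := {c, d})
    (by simp [hac.symm, had.symm, hbc.symm, hbd.symm]) (by rwa [card_pair hab])
  simpa [card_pair hab, card_pair hcd, insert_subset_iff, disjoint_insert_left, and_assoc]
    using this

end Counting

section SeparatingHalves

variable [Fintype V] [DecidableEq V]

open Fintype

def separatingHalves (u v : V) : Finset (Finset V) :=
  {A ∈ powersetCard ((card V + 1) / 2) univ | ¬(u ∈ A ↔ v ∈ A)}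

variable {u v a b : V}

lemma balanced_of_mem_separatingHalves {A : Finset V} (hA : A ∈ separatingHalves u v) :
    Balanced A :=
  balanced_iff.2 (.inr (mem_powersetCard.1 (mem_filter.1 hA).1).2)

lemma card_separatingHalves (hn : 4 ≤ card V) (huv : u ≠ v) :
    #(separatingHalves u v) = 2 * (card V - 2).choose ((card V + 1) / 2 - 1) := by
  rw [separatingHalves, filter_congr (q := fun A => (u ∈ A ∧ v ∉ A) ∨ (v ∈ A ∧ u ∉ A))
    (fun A _ => by tauto), card_filter_or_of_disjoint (fun A _ h h' => h'.2 h.1),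
    card_filter_mem_notMem (by omega) huv, card_filter_mem_notMem (by omega) huv.symm, two_mul]

lemma separatingHalves_comm (u v : V) : separatingHalves u v = separatingHalves v u :=
  filter_congr fun _ _ => by tauto

lemma card_filter_separatingHalves_comm (u v a b : V) :
    #{A ∈ separatingHalves u v | ¬(a ∈ A ↔ b ∈ A)} =
      #{A ∈ separatingHalves u v | ¬(b ∈ A ↔ a ∈ A)} := by
  congr 1
  exact filter_congr fun _ _ => by tauto

lemma card_filter_separatingHalves_of_shared_left (hn : 4 ≤ card V) (huv : u ≠ v) (hbu : b ≠ u)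
    (hbv : b ≠ v) :
    #{A ∈ separatingHalves u v | ¬(u ∈ A ↔ b ∈ A)} =
      (card V - 2).choose ((card V + 1) / 2 - 1) := by
  rw [separatingHalves, filter_filter,
    filter_congr (q := fun A => (u ∈ A ∧ v ∉ A ∧ b ∉ A) ∨ (v ∈ A ∧ b ∈ A ∧ u ∉ A))
      (fun A _ => by tauto), card_filter_or_of_disjoint (fun A _ h h' => h'.2.2 h.1),
    card_filter_mem_notMem_notMem (by omega) huv hbu.symm hbv.symm,
    card_filter_mem_mem_notMem (by omega) hbv.symm huv.symm hbu,
    show card V - 2 = card V - 3 + 1 by omega,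
    show (card V + 1) / 2 - 1 = (card V + 1) / 2 - 2 + 1 by omega, Nat.choose_succ_succ',
    add_comm]

lemma card_filter_separatingHalves_of_shared (hn : 4 ≤ card V) (huv : u ≠ v)
    (ha : a = u ∨ a = v) (hbu : b ≠ u) (hbv : b ≠ v) :
    #{A ∈ separatingHalves u v | ¬(a ∈ A ↔ b ∈ A)} =
      (card V - 2).choose ((card V + 1) / 2 - 1) := by
  rcases ha with rfl | rfl
  · exact card_filter_separatingHalves_of_shared_left hn huv hbu hbv
  · rw [separatingHalves_comm]
    exact card_filter_separatingHalves_of_shared_left hn huv.symm hbv hbu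

lemma card_filter_separatingHalves_of_disjoint (hn : 4 ≤ card V) (huv : u ≠ v) (hab : a ≠ b)
    (hau : a ≠ u) (hav : a ≠ v) (hbu : b ≠ u) (hbv : b ≠ v) :
    #{A ∈ separatingHalves u v | ¬(a ∈ A ↔ b ∈ A)} =
      4 * (card V - 4).choose ((card V + 1) / 2 - 2) := by
  rw [separatingHalves, filter_filter,
    filter_congr (q := fun A =>
        ((u ∈ A ∧ a ∈ A ∧ v ∉ A ∧ b ∉ A) ∨ (u ∈ A ∧ b ∈ A ∧ v ∉ A ∧ a ∉ A)) ∨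
          ((v ∈ A ∧ a ∈ A ∧ u ∉ A ∧ b ∉ A) ∨ (v ∈ A ∧ b ∈ A ∧ u ∉ A ∧ a ∉ A)))
      (fun A _ => by tauto),
    card_filter_or_of_disjoint (fun A _ h h' => by tauto),
    card_filter_or_of_disjoint (fun A _ h h' => by tauto),
    card_filter_or_of_disjoint (fun A _ h h' => by tauto),
    card_filter_mem_mem_notMem_notMem (by omega) hau.symm huv hbu.symm hav hab hbv.symm,
    card_filter_mem_mem_notMem_notMem (by omega) hbu.symm huv hau.symm hbv hab.symm hav.symm,
    card_filter_mem_mem_notMem_notMem (by omega) hav.symm huv.symm hbv.symm hau hab hbu.symm,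
    card_filter_mem_mem_notMem_notMem (by omega) hbv.symm huv.symm hav.symm hbu hab.symm
      hau.symm]
  ring

-- `C := (n-2).choose (⌈n/2⌉-1)` is half the number of separating halves. An edge meeting `uv` in
-- one vertex is cut by exactly half of them, `uv` by all, and an edge disjoint from `uv` by more.
lemma le_card_filter_separatingHalves (hn : 4 ≤ card V) (huv : u ≠ v) (hab : a ≠ b) :
    (card V - 2).choose ((card V + 1) / 2 - 1) +
        (if s(a, b) = s(u, v) then (card V - 2).choose ((card V + 1) / 2 - 1) else 0) +
        (if a ≠ u ∧ a ≠ v ∧ b ≠ u ∧ b ≠ v then 1 else 0) ≤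
      #{A ∈ separatingHalves u v | ¬(a ∈ A ↔ b ∈ A)} := by
  by_cases hsame : s(a, b) = s(u, v)
  · have hall : ∀ A ∈ separatingHalves u v, ¬(a ∈ A ↔ b ∈ A) := by
      intro A hA
      have := (mem_filter.1 hA).2
      rcases Sym2.eq_iff.1 hsame with ⟨rfl, rfl⟩ | ⟨rfl, rfl⟩ <;> tauto
    have hdisj : ¬(a ≠ u ∧ a ≠ v ∧ b ≠ u ∧ b ≠ v) := by
      rcases Sym2.eq_iff.1 hsame with ⟨rfl, rfl⟩ | ⟨rfl, rfl⟩ <;> simp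
    rw [if_pos hsame, if_neg hdisj, filter_true_of_mem hall, card_separatingHalves hn huv]
    omega
  rw [if_neg hsame]
  by_cases hdisj : a ≠ u ∧ a ≠ v ∧ b ≠ u ∧ b ≠ v
  · rw [if_pos hdisj, card_filter_separatingHalves_of_disjoint hn huv hab hdisj.1 hdisj.2.1
      hdisj.2.2.1 hdisj.2.2.2]
    have := choose_lt_four_mul_choose hn
    omega
  rw [if_neg hdisj, add_zero, add_zero]
  have hne : ¬((a = u ∨ a = v) ∧ (b = u ∨ b = v)) := by
    rintro ⟨rfl | rfl, rfl | rfl⟩ <;> simp_all [Sym2.eq_swap]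
  by_cases ha : a = u ∨ a = v
  · exact (card_filter_separatingHalves_of_shared hn huv ha (by tauto) (by tauto)).ge
  · rw [card_filter_separatingHalves_comm]
    exact (card_filter_separatingHalves_of_shared hn huv (by tauto) (by tauto) (by tauto)).ge

end SeparatingHalves

section Averaging

variable [Fintype V] [DecidableEq V] (H : SimpleGraph V) [DecidableRel H.Adj]

open Fintype

lemma two_mul_sum_cut (S : Finset (Finset V)) :
    2 * ∑ A ∈ S, cut H A =
      ∑ p ∈ ({p : V × V | H.Adj p.1 p.2} : Finset _), #{A ∈ S | ¬(p.1 ∈ A ↔ p.2 ∈ A)} := by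
  calc 2 * ∑ A ∈ S, cut H A
      = ∑ A ∈ S, #{p ∈ ({p : V × V | H.Adj p.1 p.2} : Finset _) | ¬(p.1 ∈ A ↔ p.2 ∈ A)} := by
        rw [mul_sum]
        refine sum_congr rfl fun A _ => ?_
        rw [two_mul]
        nth_rw 1 [cut_eq_card_filter]
        rw [cut_eq_card_filter_swap, ← card_filter_or_of_disjoint (fun p _ h h' => by tauto),
          filter_filter]
        exact congrArg card (filter_congr fun p _ => by tauto)
    _ = _ := by
        simp only [card_filter]
        exact sum_comm

lemma card_separatingHalves_mul_le_two_mul_sum_cut (hn : 4 ≤ card V) {u v : V}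
    (huv : H.Adj u v) :
    #(separatingHalves u v) * (#H.edgeFinset + 1) +
        #{p : V × V | H.Adj p.1 p.2 ∧ p.1 ≠ u ∧ p.1 ≠ v ∧ p.2 ≠ u ∧ p.2 ≠ v} ≤
      2 * ∑ A ∈ separatingHalves u v, cut H A := by
  set C := (card V - 2).choose ((card V + 1) / 2 - 1)
  have hD : #({p : V × V | H.Adj p.1 p.2} : Finset _) = 2 * #H.edgeFinset :=
    H.two_mul_card_edgeFinset.symm
  have hsame : #{p : V × V | H.Adj p.1 p.2 ∧ s(p.1, p.2) = s(u, v)} = 2 := by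
    rw [card_eq_two]
    refine ⟨(u, v), (v, u), by simp [huv.ne], ?_⟩
    ext ⟨a, b⟩
    simp only [mem_filter, mem_univ, true_and, mem_insert, mem_singleton, Prod.mk.injEq,
      Sym2.eq_iff]
    constructor
    · exact fun h => h.2
    · rintro (⟨rfl, rfl⟩ | ⟨rfl, rfl⟩)
      · exact ⟨huv, .inl ⟨rfl, rfl⟩⟩
      · exact ⟨huv.symm, .inr ⟨rfl, rfl⟩⟩
  rw [two_mul_sum_cut, card_separatingHalves hn huv.ne]
  calc 2 * C * (#H.edgeFinset + 1) +
        #{p : V × V | H.Adj p.1 p.2 ∧ p.1 ≠ u ∧ p.1 ≠ v ∧ p.2 ≠ u ∧ p.2 ≠ v}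
      = ∑ p ∈ ({p : V × V | H.Adj p.1 p.2} : Finset _),
          (C + (if s(p.1, p.2) = s(u, v) then C else 0) +
            (if p.1 ≠ u ∧ p.1 ≠ v ∧ p.2 ≠ u ∧ p.2 ≠ v then 1 else 0)) := by
        simp only [sum_add_distrib, sum_const, sum_ite, smul_eq_mul, mul_one, filter_filter, hD,
          hsame]
        ring
    _ ≤ _ := sum_le_sum fun p hp =>
        le_card_filter_separatingHalves hn huv.ne (mem_filter.1 hp).2.ne

variable {H}

lemma exists_balanced_card_edgeFinset_lt_two_mul_cut (hn : 4 ≤ card V) {u v : V}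
    (huv : H.Adj u v) : ∃ A, Balanced A ∧ #H.edgeFinset < 2 * cut H A := by
  have h := card_separatingHalves_mul_le_two_mul_sum_cut H hn huv
  have hpos : 0 < #(separatingHalves u v) := by
    rw [card_separatingHalves hn huv.ne]
    exact Nat.mul_pos two_pos (Nat.choose_pos (by omega))
  obtain ⟨A, hA, hlt⟩ := exists_lt_of_sum_lt (s := separatingHalves u v)
    (f := fun _ => #H.edgeFinset) (g := fun A => 2 * cut H A)
    (by rw [sum_const, smul_eq_mul, ← mul_sum]; nlinarith)
  exact ⟨A, balanced_of_mem_separatingHalves hA, hlt⟩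

lemma exists_balanced_card_edgeFinset_add_one_lt_two_mul_cut (hn : 4 ≤ card V) {u v w x : V}
    (huv : H.Adj u v) (hwx : H.Adj w x) (hwu : w ≠ u) (hwv : w ≠ v) (hxu : x ≠ u)
    (hxv : x ≠ v) : ∃ A, Balanced A ∧ #H.edgeFinset + 1 < 2 * cut H A := by
  have h := card_separatingHalves_mul_le_two_mul_sum_cut H hn huv
  have hpos : 0 < #{p : V × V | H.Adj p.1 p.2 ∧ p.1 ≠ u ∧ p.1 ≠ v ∧ p.2 ≠ u ∧ p.2 ≠ v} :=
    card_pos.2 ⟨(w, x), by simp [hwx, hwu, hwv, hxu, hxv]⟩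
  obtain ⟨A, hA, hlt⟩ := exists_lt_of_sum_lt (s := separatingHalves u v)
    (f := fun _ => #H.edgeFinset + 1) (g := fun A => 2 * cut H A)
    (by rw [sum_const, smul_eq_mul, ← mul_sum]; omega)
  exact ⟨A, balanced_of_mem_separatingHalves hA, hlt⟩

lemma exists_balanced_card_edgeFinset_le_two_mul_cut (hn : 4 ≤ card V) :
    ∃ A, Balanced A ∧ #H.edgeFinset ≤ 2 * cut H A := by
  by_cases hbot : H = ⊥
  · obtain ⟨A, hA⟩ := exists_balanced (V := V)
    exact ⟨A, hA, by simp [SimpleGraph.edgeFinset_eq_empty.2 hbot]⟩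
  obtain ⟨u, v, huv⟩ := SimpleGraph.ne_bot_iff_exists_adj.1 hbot
  obtain ⟨A, hA, hlt⟩ := exists_balanced_card_edgeFinset_lt_two_mul_cut hn huv
  exact ⟨A, hA, hlt.le⟩

end Averaging

section Stars

variable [Fintype V] [DecidableEq V] {H : SimpleGraph V} [DecidableRel H.Adj]

open Fintype

lemma exists_balanced_card_le_cut (hn : 2 ≤ card V) {c : V} {X : Finset V}
    (hX : X ⊆ H.neighborFinset c) (hXcard : #X ≤ (card V + 1) / 2) :
    ∃ A, Balanced A ∧ #X ≤ cut H A := by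
  have hcX : c ∉ X := fun h => H.loopless.irrefl c ((H.mem_neighborFinset c c).1 (hX h))
  obtain ⟨A, hcA, hAX, hA⟩ := exists_subsuperset_card_eq (n := card V / 2)
    (singleton_subset_iff.2 (mem_sdiff.2 ⟨mem_univ c, hcX⟩)) (by rw [card_singleton]; omega)
    (by rw [card_sdiff_of_subset (subset_univ X), card_univ]; omega)
  refine ⟨A, balanced_iff.2 (.inl hA), card_le_card_of_injOn (fun l => (c, l)) ?_ ?_⟩
  · intro l hl
    have hlA : l ∉ A := fun h => (mem_sdiff.1 (hAX h)).2 hl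
    simpa [cut, singleton_subset_iff.1 hcA, hlA] using (H.mem_neighborFinset c l).1 (hX hl)
  · intro l _ l' _ h
    exact (Prod.ext_iff.1 h).2

lemma exists_balanced_card_edgeFinset_add_one_lt_two_mul_cut_of_star (hn : 4 ≤ card V)
    {c z : V} (hstar : ∀ x y, H.Adj x y → x = c ∨ y = c) (hzc : z ≠ c) (hcz : ¬ H.Adj c z)
    (ht : 2 ≤ #H.edgeFinset) : ∃ A, Balanced A ∧ #H.edgeFinset + 1 < 2 * cut H A := by
  have hdeg : #H.edgeFinset ≤ #(H.neighborFinset c) := by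
    rw [SimpleGraph.card_neighborFinset_eq_degree, ← SimpleGraph.card_incidenceFinset_eq_degree]
    refine card_le_card fun e he => ?_
    induction e using Sym2.ind with
    | _ x y =>
      rw [SimpleGraph.mem_edgeFinset, SimpleGraph.mem_edgeSet] at he
      rw [SimpleGraph.mem_incidenceFinset]
      exact ⟨he, by rcases hstar x y he with rfl | rfl <;> simp⟩
  have hdeg' : #(H.neighborFinset c) ≤ card V - 2 := by
    have hsub : H.neighborFinset c ⊆ univ \ {c, z} := fun l hl => by
      rw [SimpleGraph.mem_neighborFinset] at hl
      simp only [mem_sdiff, mem_univ, mem_insert, mem_singleton, true_and]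
      rintro (rfl | rfl)
      exacts [H.loopless.irrefl _ hl, hcz hl]
    simpa [card_sdiff_of_subset, card_pair hzc.symm] using card_le_card hsub
  obtain ⟨X, hX, hXcard⟩ := exists_subset_card_eq (s := H.neighborFinset c)
    (n := min #H.edgeFinset ((card V + 1) / 2)) (by omega)
  obtain ⟨A, hA, hcut⟩ := exists_balanced_card_le_cut (by omega) hX (by omega)
  exact ⟨A, hA, by omega⟩

end Stars

lemma exists_triangle_of_pairwise_meet {H : SimpleGraph V} {a b : V} (hab : H.Adj a b)
    (hmeet : ∀ a b x y, H.Adj a b → H.Adj x y → a = x ∨ a = y ∨ b = x ∨ b = y)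
    (hnstar : ∀ c, ∃ x y, H.Adj x y ∧ x ≠ c ∧ y ≠ c) :
    ∃ u v w, u ≠ v ∧ u ≠ w ∧ v ≠ w ∧
      ∀ x y, H.Adj x y ↔ pairEq x y u v ∨ pairEq x y u w ∨ pairEq x y v w := by
  obtain ⟨c, hbc, hca⟩ : ∃ c, H.Adj b c ∧ c ≠ a := by
    obtain ⟨x, y, hxy, hxa, hya⟩ := hnstar a
    rcases hmeet a b x y hab hxy with rfl | rfl | rfl | rfl
    exacts [absurd rfl hxa, absurd rfl hya, ⟨y, hxy, hya⟩, ⟨x, hxy.symm, hxa⟩]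
  have hac : H.Adj a c := by
    obtain ⟨p, q, hpq, hpb, hqb⟩ := hnstar b
    have := hmeet p q a b hpq hab
    have := hmeet p q b c hpq hbc
    grind [SimpleGraph.adj_comm]
  refine ⟨a, b, c, hab.ne, hac.ne, hbc.ne, fun x y => ⟨fun hxy => ?_, ?_⟩⟩
  · have := hmeet x y a b hxy hab
    have := hmeet x y a c hxy hac
    have := hmeet x y b c hxy hbc
    have := hxy.ne
    have := hab.ne
    have := hbc.ne
    grind [pairEq]
  · rintro ((⟨rfl, rfl⟩ | ⟨rfl, rfl⟩) | (⟨rfl, rfl⟩ | ⟨rfl, rfl⟩) | (⟨rfl, rfl⟩ | ⟨rfl, rfl⟩))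
    exacts [hab, hab.symm, hac, hac.symm, hbc, hbc.symm]

lemma exists_adj_iff_pairEq_of_card_edgeFinset_eq_one [Fintype V] {H : SimpleGraph V}
    [DecidableRel H.Adj] (h : #H.edgeFinset = 1) :
    ∃ u v, u ≠ v ∧ ∀ a b, H.Adj a b ↔ pairEq a b u v := by
  obtain ⟨e, he⟩ := card_eq_one.1 h
  induction e using Sym2.ind with
  | _ u v =>
    have hadj : ∀ a b, H.Adj a b ↔ s(a, b) = s(u, v) := fun a b => by
      rw [← SimpleGraph.mem_edgeSet, ← SimpleGraph.mem_edgeFinset, he, mem_singleton]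
    exact ⟨u, v, ((hadj u v).2 rfl).ne, fun a b => (hadj a b).trans Sym2.eq_iff⟩

section Characterization

variable [Fintype V] [DecidableEq V] {H : SimpleGraph V} [DecidableRel H.Adj]

open Fintype

lemma two_mul_cut_le_of_adj_iff_pairEq {u v : V} (h : ∀ a b, H.Adj a b ↔ pairEq a b u v)
    (A : Finset V) : 2 * cut H A ≤ #H.edgeFinset + 1 := by
  have ht : #H.edgeFinset ≤ 1 := by
    refine (card_le_card fun e he => ?_).trans (card_singleton s(u, v)).le
    induction e using Sym2.ind with
    | _ a b => simpa [h, pairEq, Sym2.eq_iff] using he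
  have := cut_le_card_edgeFinset H A
  omega

lemma two_mul_cut_le_of_adj_iff_triangle {u v w : V}
    (h : ∀ a b, H.Adj a b ↔ pairEq a b u v ∨ pairEq a b u w ∨ pairEq a b v w) (A : Finset V) :
    2 * cut H A ≤ #H.edgeFinset + 1 := by
  have ht : #H.edgeFinset ≤ 3 := by
    refine (card_le_card fun e he => ?_).trans
      (card_le_three (a := s(u, v)) (b := s(u, w)) (c := s(v, w)))
    induction e using Sym2.ind with
    | _ a b => simpa [h, pairEq, Sym2.eq_iff] using he
  obtain ⟨x, y, hxy, hA⟩ : ∃ x y, H.Adj x y ∧ (x ∈ A ↔ y ∈ A) := by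
    by_cases huv : u ∈ A ↔ v ∈ A
    · exact ⟨u, v, (h u v).2 (.inl (.inl ⟨rfl, rfl⟩)), huv⟩
    by_cases huw : u ∈ A ↔ w ∈ A
    · exact ⟨u, w, (h u w).2 (.inr (.inl (.inl ⟨rfl, rfl⟩))), huw⟩
    exact ⟨v, w, (h v w).2 (.inr (.inr (.inl ⟨rfl, rfl⟩))), by tauto⟩
  have := cut_lt_card_edgeFinset H hxy hA
  omega

lemma eq_bot_or_edge_or_triangle_of_forall_two_mul_cut_le (hn : 4 ≤ card V)
    (hH : ∀ c, ∃ z ≠ c, ¬ H.Adj c z)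
    (h : ∀ A, Balanced A → 2 * cut H A ≤ #H.edgeFinset + 1) :
    H = ⊥ ∨ (∃ u v, u ≠ v ∧ ∀ a b, H.Adj a b ↔ pairEq a b u v) ∨
      ∃ u v w, u ≠ v ∧ u ≠ w ∧ v ≠ w ∧
        ∀ a b, H.Adj a b ↔ pairEq a b u v ∨ pairEq a b u w ∨ pairEq a b v w := by
  by_cases hbot : H = ⊥
  · exact .inl hbot
  obtain ⟨u, v, huv⟩ := SimpleGraph.ne_bot_iff_exists_adj.1 hbot
  have hodd : #H.edgeFinset % 2 = 1 := by
    obtain ⟨A, hA, hlt⟩ := exists_balanced_card_edgeFinset_lt_two_mul_cut hn huv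
    have := h A hA
    omega
  obtain ht | ht : #H.edgeFinset = 1 ∨ 3 ≤ #H.edgeFinset := by omega
  · exact .inr (.inl (exists_adj_iff_pairEq_of_card_edgeFinset_eq_one ht))
  have hmeet : ∀ a b x y, H.Adj a b → H.Adj x y → a = x ∨ a = y ∨ b = x ∨ b = y := by
    intro a b x y hab hxy
    by_contra! hne
    obtain ⟨A, hA, hlt⟩ := exists_balanced_card_edgeFinset_add_one_lt_two_mul_cut hn hab hxy
      hne.1.symm hne.2.2.1.symm hne.2.1.symm hne.2.2.2.symm
    exact absurd (h A hA) hlt.not_ge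
  have hnstar : ∀ c, ∃ x y, H.Adj x y ∧ x ≠ c ∧ y ≠ c := by
    intro c
    by_contra! hstar
    obtain ⟨z, hzc, hcz⟩ := hH c
    obtain ⟨A, hA, hlt⟩ := exists_balanced_card_edgeFinset_add_one_lt_two_mul_cut_of_star hn
      (fun x y hxy => or_iff_not_imp_left.2 (hstar x y hxy)) hzc hcz (by omega)
    exact absurd (h A hA) hlt.not_ge
  exact .inr (.inr (exists_triangle_of_pairwise_meet huv hmeet hnstar))

lemma forall_two_mul_cut_le_iff (hn : 4 ≤ card V) (hH : ∀ c, ∃ z ≠ c, ¬ H.Adj c z) :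
    (∀ A, Balanced A → 2 * cut H A ≤ #H.edgeFinset + 1) ↔
      H = ⊥ ∨ (∃ u v, u ≠ v ∧ ∀ a b, H.Adj a b ↔ pairEq a b u v) ∨
        ∃ u v w, u ≠ v ∧ u ≠ w ∧ v ≠ w ∧
          ∀ a b, H.Adj a b ↔ pairEq a b u v ∨ pairEq a b u w ∨ pairEq a b v w := by
  refine ⟨eq_bot_or_edge_or_triangle_of_forall_two_mul_cut_le hn hH, ?_⟩
  rintro (rfl | ⟨u, v, -, h⟩ | ⟨u, v, w, -, -, -, h⟩) A -
  · simp [cut]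
  · exact two_mul_cut_le_of_adj_iff_pairEq h A
  · exact two_mul_cut_le_of_adj_iff_triangle h A

end Characterization

lemma pairEq.ne {a b u v : V} (h : pairEq a b u v) (huv : u ≠ v) : a ≠ b := by
  rcases h with ⟨rfl, rfl⟩ | ⟨rfl, rfl⟩
  exacts [huv, huv.symm]

lemma forall_adj_iff_compl {G : SimpleGraph V} {P : V → V → Prop} (hP : ∀ a b, P a b → a ≠ b) :
    (∀ a b, G.Adj a b ↔ a ≠ b ∧ ¬ P a b) ↔ ∀ a b, Gᶜ.Adj a b ↔ P a b := by
  simp only [SimpleGraph.compl_adj]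
  refine forall₂_congr fun a b => ?_
  have := hP a b
  have := G.ne_of_adj (a := a) (b := b)
  tauto

lemma isCompleteMinusEdge_iff_compl {G : SimpleGraph V} :
    IsCompleteMinusEdge G ↔ ∃ u v, u ≠ v ∧ ∀ a b, Gᶜ.Adj a b ↔ pairEq a b u v :=
  exists₂_congr fun _ _ => and_congr_right fun huv =>
    forall_adj_iff_compl fun _ _ h => h.ne huv

lemma isCompleteMinusTriangle_iff_compl {G : SimpleGraph V} :
    IsCompleteMinusTriangle G ↔ ∃ u v w, u ≠ v ∧ u ≠ w ∧ v ≠ w ∧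
      ∀ a b, Gᶜ.Adj a b ↔ pairEq a b u v ∨ pairEq a b u w ∨ pairEq a b v w :=
  exists₃_congr fun _ _ _ => and_congr_right fun huv => and_congr_right fun huw =>
    and_congr_right fun hvw => forall_adj_iff_compl fun _ _ h => by
      rcases h with h | h | h
      exacts [h.ne huv, h.ne huw, h.ne hvw]

section Rna

variable [Fintype V] [DecidableEq V] (G : SimpleGraph V) [DecidableRel G.Adj]

open Fintype

lemma card_edgeFinset_add_card_edgeFinset_compl :
    #G.edgeFinset + #Gᶜ.edgeFinset = (card V).choose 2 := by
  rw [← card_union_of_disjoint (SimpleGraph.disjoint_edgeFinset.2 disjoint_compl_right),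
    ← SimpleGraph.edgeFinset_sup, ← SimpleGraph.card_edgeFinset_top_eq_card_choose_two]
  congr! 2
  exact sup_compl_eq_top

lemma rna_eq_iff (hn : 4 ≤ card V) :
    rna G = (2 * #G.edgeFinset + card V) / 4 ↔
      ∀ A, Balanced A → 2 * cut Gᶜ A ≤ #Gᶜ.edgeFinset + 1 := by
  have hsum : ∀ A, Balanced A → cut G A + cut Gᶜ A =
      (2 * #G.edgeFinset + card V) / 4 + (#Gᶜ.edgeFinset + 1) / 2 := fun A hA => by
    rw [cut_add_cut_compl_of_balanced G hA,
      half_mul_half_succ_eq _ _ _ (card_edgeFinset_add_card_edgeFinset_compl G)]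
  have hrna : ∀ A, Balanced A → rna G ≤ cut G A := fun A hA => Nat.sInf_le ⟨A, hA, rfl⟩
  constructor
  · intro h A hA
    have := hrna A hA
    have := hsum A hA
    omega
  · intro h
    obtain ⟨A, hA, hcut⟩ := exists_balanced_card_edgeFinset_le_two_mul_cut (H := Gᶜ) hn
    refine le_antisymm ?_ (le_csInf ⟨_, A, hA, rfl⟩ ?_)
    · have := hrna A hA
      have := hsum A hA
      omega
    · rintro _ ⟨B, hB, rfl⟩
      have := h B hB
      have := hsum B hB
      omega

end Rna

/-- for `n ≥ 4`, `σ⁻(G) = ⌊m/2 + n/4⌋` iff `G` is `K_n`,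
`K_n - e` or `K_n - △`. -/
theorem stmt14 [Fintype V] [DecidableEq V] (G : SimpleGraph V) [DecidableRel G.Adj]
    (hconn : G.Connected) (hn : 4 ≤ Fintype.card V) :
    rna G = (2 * G.edgeSet.ncard + Fintype.card V) / 4 ↔
      (G = ⊤ ∨ IsCompleteMinusEdge G ∨ IsCompleteMinusTriangle G) := by
  have : Nontrivial V := Fintype.one_lt_card_iff_nontrivial.1 (by omega)
  have hcompl : ∀ c, ∃ z ≠ c, ¬ Gᶜ.Adj c z := fun c => by
    obtain ⟨z, hz⟩ := hconn.preconnected.exists_adj_of_nontrivial c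
    exact ⟨z, hz.ne', fun h => ((G.compl_adj c z).1 h).2 hz⟩
  rw [← SimpleGraph.coe_edgeFinset, Set.ncard_coe_finset, rna_eq_iff G hn,
    forall_two_mul_cut_le_iff hn hcompl, compl_eq_bot, isCompleteMinusEdge_iff_compl,
    isCompleteMinusTriangle_iff_compl]

end PSG
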